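/- arXiv:1805.03570 — 2 statements merged into one kernel-verified Lean document; each statement's English description precedes it below -/
import Mathlib

section
/- Assume 1 < Q < 2. Then there exist constants 0 < C1 ≤ C2 < ∞ such that for every x ∈ ℝ³ with ρ(x) = 1: C1 ≤ ∫_{ℝ³} ds / (ρ(s)·ρ(s+x)) ≤ C2. -/
/-!
The gauge `ρ` is a quasi-norm, `ρ (a + b) ≤ K (ρ a + ρ b)`, whose sublevel sets have volume
`|{ρ ≤ r}| ≤ 8 r ^ Q`. When `ρ x = 1`, one of `ρ s`, `ρ (s + x)` is at least `3 / (4K)`, so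
`1 / (ρ s ρ (s + x)) ≤ g (ρ s) + g (ρ (s + x))` with `g a = 2K / a` for `a ≤ 1 / (4K)` and
`g a = 1 / a²` otherwise. By the layer-cake formula and the volume bound, `1 / ρ` is integrable
near the origin because `Q > 1` and `1 / ρ²` is integrable away from it because `Q < 2`;
translation invariance then bounds the integral uniformly in `x`. For the lower bound, the
integrand is at least `1 / (2K)` on the unit ball `{ρ ≤ 1}`, outside a null set.
-/

open MeasureTheory Set
open scoped ENNReal

def HasVolumeGrowth {α : Type*} [MeasurableSpace α] (μ : Measure α) (g : α → ℝ) (c Q : ℝ) :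
    Prop :=
  ∀ r, 0 < r → μ {a | g a ≤ r} ≤ ENNReal.ofReal (c * r ^ Q)

namespace HasVolumeGrowth

variable {α : Type*} [MeasurableSpace α] {μ : Measure α} {g : α → ℝ} {c Q p : ℝ}

lemma measure_le_rpow_neg_le (h : HasVolumeGrowth μ g c Q) (hg0 : ∀ a, 0 ≤ g a) (hp : 0 < p)
    {t : ℝ} (ht : 0 < t) :
    μ {a | t ≤ g a ^ (-p)} ≤ ENNReal.ofReal (c * t ^ ((-p)⁻¹ * Q)) := by
  have hsub : {a | t ≤ g a ^ (-p)} ⊆ {a | g a ≤ t ^ (-p)⁻¹} := by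
    intro a ha
    have hga : 0 < g a := by
      refine (hg0 a).lt_of_ne fun h0 => ?_
      rw [mem_ofPred_eq, ← h0, Real.zero_rpow (neg_ne_zero.mpr hp.ne')] at ha
      exact ht.not_ge ha
    calc g a = (g a ^ (-p)) ^ (-p)⁻¹ := (Real.rpow_rpow_inv hga.le (neg_ne_zero.mpr hp.ne')).symm
      _ ≤ t ^ (-p)⁻¹ := Real.rpow_le_rpow_of_nonpos ht ha (inv_nonpos.mpr (neg_nonpos.mpr hp.le))
  calc μ {a | t ≤ g a ^ (-p)} ≤ μ {a | g a ≤ t ^ (-p)⁻¹} := measure_mono hsub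
    _ ≤ ENNReal.ofReal (c * (t ^ (-p)⁻¹) ^ Q) := h _ (Real.rpow_pos_of_pos ht _)
    _ = ENNReal.ofReal (c * t ^ ((-p)⁻¹ * Q)) := by rw [← Real.rpow_mul ht.le]

lemma setLIntegral_rpow_neg_lt_top_of_lt (h : HasVolumeGrowth μ g c Q) (hg : Measurable g)
    (hg0 : ∀ a, 0 ≤ g a) (hp : 0 < p) (hpQ : p < Q) {b : ℝ} (hb : 0 < b) :
    ∫⁻ a in {a | g a ≤ b}, ENNReal.ofReal (g a ^ (-p)) ∂μ < ⊤ := by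
  rw [lintegral_eq_lintegral_meas_le _ (ae_of_all _ fun a => Real.rpow_nonneg (hg0 a) _)
      (hg.pow_const _).aemeasurable, ← Ioc_union_Ioi_eq_Ioi zero_le_one,
    lintegral_union measurableSet_Ioi (Ioc_disjoint_Ioi le_rfl)]
  refine ENNReal.add_lt_top.mpr ⟨?_, ?_⟩
  · calc ∫⁻ t in Ioc (0 : ℝ) 1, μ.restrict {a | g a ≤ b} {a | t ≤ g a ^ (-p)}
        ≤ ∫⁻ _ in Ioc (0 : ℝ) 1, μ {a | g a ≤ b} :=
          setLIntegral_mono measurable_const fun t _ =>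
            (measure_mono (subset_univ _)).trans_eq (Measure.restrict_apply_univ _)
      _ < ⊤ := by
          rw [setLIntegral_const, Real.volume_Ioc]
          exact ENNReal.mul_lt_top ((h b hb).trans_lt ENNReal.ofReal_lt_top) ENNReal.ofReal_lt_top
  · have hexp : (-p)⁻¹ * Q < -1 := by
      rw [inv_neg, neg_mul, neg_lt_neg_iff, ← div_eq_inv_mul, one_lt_div hp]
      exact hpQ
    calc ∫⁻ t in Ioi (1 : ℝ), μ.restrict {a | g a ≤ b} {a | t ≤ g a ^ (-p)}
        ≤ ∫⁻ t in Ioi (1 : ℝ), ENNReal.ofReal (c * t ^ ((-p)⁻¹ * Q)) :=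
          setLIntegral_mono' measurableSet_Ioi fun t ht =>
            (Measure.restrict_apply_le _ _).trans
              (h.measure_le_rpow_neg_le hg0 hp (zero_lt_one.trans ht))
      _ < ⊤ := ((integrableOn_Ioi_rpow_of_lt hexp one_pos).const_mul c).lintegral_lt_top

lemma setLIntegral_rpow_neg_lt_top_of_gt (h : HasVolumeGrowth μ g c Q) (hg : Measurable g)
    (hg0 : ∀ a, 0 ≤ g a) (hp : 0 < p) (hQp : Q < p) {e : ℝ} (he : 0 < e) :
    ∫⁻ a in {a | e < g a}, ENNReal.ofReal (g a ^ (-p)) ∂μ < ⊤ := by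
  set T := e ^ (-p)
  have hT : 0 < T := Real.rpow_pos_of_pos he _
  have hvanish : ∀ t ∈ Ioi T, μ.restrict {a | e < g a} {a | t ≤ g a ^ (-p)} = 0 := by
    intro t ht
    rw [Measure.restrict_apply' (measurableSet_lt measurable_const hg)]
    refine measure_mono_null (fun a ⟨hta, hea⟩ => ?_) measure_empty
    exact (ht.trans_le hta).not_gt (Real.rpow_lt_rpow_of_neg he hea (neg_neg_of_pos hp))
  rw [lintegral_eq_lintegral_meas_le _ (ae_of_all _ fun a => Real.rpow_nonneg (hg0 a) _)
      (hg.pow_const _).aemeasurable, ← Ioc_union_Ioi_eq_Ioi hT.le,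
    lintegral_union measurableSet_Ioi (Ioc_disjoint_Ioi le_rfl),
    setLIntegral_congr_fun measurableSet_Ioi hvanish, lintegral_zero, add_zero]
  have hexp : -1 < (-p)⁻¹ * Q := by
    rw [inv_neg, neg_mul, neg_lt_neg_iff, ← div_eq_inv_mul, div_lt_one hp]
    exact hQp
  calc ∫⁻ t in Ioc 0 T, μ.restrict {a | e < g a} {a | t ≤ g a ^ (-p)}
      ≤ ∫⁻ t in Ioc 0 T, ENNReal.ofReal (c * t ^ ((-p)⁻¹ * Q)) :=
        setLIntegral_mono' measurableSet_Ioc fun t ht =>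
          (Measure.restrict_apply_le _ _).trans (h.measure_le_rpow_neg_le hg0 hp ht.1)
    _ < ⊤ := ((intervalIntegral.intervalIntegrable_rpow' hexp).1.const_mul c).lintegral_lt_top

end HasVolumeGrowth

noncomputable def invMulMajorant (K a : ℝ) : ℝ :=
  if a ≤ (4 * K)⁻¹ then 2 * K * a ^ (-1 : ℝ) else a ^ (-2 : ℝ)

lemma measurable_invMulMajorant (K : ℝ) : Measurable (invMulMajorant K) :=
  Measurable.ite measurableSet_Iic (measurable_const.mul (measurable_id.pow_const _))
    (measurable_id.pow_const _)

lemma invMulMajorant_nonneg {K a : ℝ} (hK : 0 ≤ K) (ha : 0 ≤ a) : 0 ≤ invMulMajorant K a := by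
  unfold invMulMajorant
  split_ifs <;> positivity

lemma one_div_mul_le_of_le_inv {K a b : ℝ} (ha : 0 < a) (hb : 0 < b) (hab : 1 ≤ K * (a + b))
    (hsmall : a ≤ (4 * K)⁻¹) : 1 / (a * b) ≤ 2 * K * a ^ (-1 : ℝ) := by
  have hK : 0 < K := by
    by_contra! hK
    nlinarith
  have hKa : 4 * K * a ≤ 1 :=
    calc 4 * K * a ≤ 4 * K * (4 * K)⁻¹ := mul_le_mul_of_nonneg_left hsmall (by positivity)
      _ = 1 := mul_inv_cancel₀ (by positivity)
  rw [Real.rpow_neg_one, div_le_iff₀ (mul_pos ha hb)]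
  have : 2 * K * a⁻¹ * (a * b) = 2 * K * b := by field_simp
  rw [this]
  nlinarith

lemma one_div_mul_le_invMulMajorant_add {K a b : ℝ} (hK : 0 < K) (ha : 0 ≤ a) (hb : 0 ≤ b)
    (hab : 1 ≤ K * (a + b)) : 1 / (a * b) ≤ invMulMajorant K a + invMulMajorant K b := by
  have hM := add_nonneg (invMulMajorant_nonneg hK.le ha) (invMulMajorant_nonneg hK.le hb)
  rcases ha.eq_or_lt with rfl | ha
  · simpa using hM
  rcases hb.eq_or_lt with rfl | hb
  · simpa using hM
  unfold invMulMajorant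
  split_ifs with hA hB hB
  · exact (one_div_mul_le_of_le_inv ha hb hab hA).trans (le_add_of_nonneg_right (by positivity))
  · exact (one_div_mul_le_of_le_inv ha hb hab hA).trans (le_add_of_nonneg_right (by positivity))
  · rw [mul_comm a]
    exact (one_div_mul_le_of_le_inv hb ha (by linarith) hB).trans
      (le_add_of_nonneg_left (by positivity))
  · rw [Real.rpow_neg ha.le, Real.rpow_neg hb.le, Real.rpow_two, Real.rpow_two, ← inv_pow,
      ← inv_pow, one_div, mul_inv]
    nlinarith [sq_nonneg (a⁻¹ - b⁻¹), mul_pos (inv_pos.mpr ha) (inv_pos.mpr hb)]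

lemma HasVolumeGrowth.lintegral_invMulMajorant_lt_top {α : Type*} [MeasurableSpace α]
    {μ : Measure α} {g : α → ℝ} {c Q K : ℝ} (h : HasVolumeGrowth μ g c Q) (hg : Measurable g)
    (hg0 : ∀ a, 0 ≤ g a) (hK : 0 < K) (hQ1 : 1 < Q) (hQ2 : Q < 2) :
    ∫⁻ a, ENNReal.ofReal (invMulMajorant K (g a)) ∂μ < ⊤ := by
  have hS : MeasurableSet {a | g a ≤ (4 * K)⁻¹} := measurableSet_le hg measurable_const
  have hnear : ∫⁻ a in {a | g a ≤ (4 * K)⁻¹}, ENNReal.ofReal (invMulMajorant K (g a)) ∂μ =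
      ENNReal.ofReal (2 * K) * ∫⁻ a in {a | g a ≤ (4 * K)⁻¹}, ENNReal.ofReal (g a ^ (-1 : ℝ)) ∂μ := by
    rw [← lintegral_const_mul' _ _ ENNReal.ofReal_ne_top]
    refine setLIntegral_congr_fun hS fun a (ha : g a ≤ (4 * K)⁻¹) => ?_
    rw [invMulMajorant, if_pos ha, ENNReal.ofReal_mul (by positivity)]
  have hfar : ∫⁻ a in {a | g a ≤ (4 * K)⁻¹}ᶜ, ENNReal.ofReal (invMulMajorant K (g a)) ∂μ =
      ∫⁻ a in {a | (4 * K)⁻¹ < g a}, ENNReal.ofReal (g a ^ (-2 : ℝ)) ∂μ := by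
    rw [compl_ofPred]
    simp_rw [not_le]
    refine setLIntegral_congr_fun (measurableSet_lt measurable_const hg) fun a ha => ?_
    rw [invMulMajorant, if_neg (not_le.mpr ha)]
  rw [← lintegral_add_compl _ hS, hnear, hfar]
  exact ENNReal.add_lt_top.mpr
    ⟨ENNReal.mul_lt_top ENNReal.ofReal_lt_top
      (h.setLIntegral_rpow_neg_lt_top_of_lt hg hg0 one_pos hQ1 (by positivity)),
    h.setLIntegral_rpow_neg_lt_top_of_gt hg hg0 two_pos hQ2 (by positivity)⟩

section QuasiNorm

variable {E : Type*} [MeasurableSpace E] [AddGroup E] [MeasurableAdd E] {μ : Measure E}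
  [μ.IsAddRightInvariant] {ρ : E → ℝ} {K : ℝ}

theorem HasVolumeGrowth.exists_lintegral_one_div_mul_le {c Q : ℝ} (h : HasVolumeGrowth μ ρ c Q)
    (hρ : Measurable ρ) (hρ0 : ∀ t, 0 ≤ ρ t) (hneg : ∀ t, ρ (-t) = ρ t)
    (htri : ∀ a b, ρ (a + b) ≤ K * (ρ a + ρ b)) (hK : 0 < K) (hQ1 : 1 < Q) (hQ2 : Q < 2) :
    ∃ C : ℝ≥0∞, C ≠ ⊤ ∧
      ∀ x, ρ x = 1 → ∫⁻ s, ENNReal.ofReal (1 / (ρ s * ρ (s + x))) ∂μ ≤ C := by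
  set F : E → ℝ≥0∞ := fun s => ENNReal.ofReal (invMulMajorant K (ρ s))
  have hF : Measurable F := ((measurable_invMulMajorant K).comp hρ).ennreal_ofReal
  refine ⟨2 * ∫⁻ s, F s ∂μ,
    ENNReal.mul_ne_top ENNReal.ofNat_ne_top (h.lintegral_invMulMajorant_lt_top hρ hρ0 hK hQ1 hQ2).ne,
    fun x hx => ?_⟩
  have hsum : ∀ s, 1 ≤ K * (ρ s + ρ (s + x)) := fun s => by
    simpa [hx, hneg] using htri (-s) (s + x)
  calc ∫⁻ s, ENNReal.ofReal (1 / (ρ s * ρ (s + x))) ∂μ ≤ ∫⁻ s, F s + F (s + x) ∂μ :=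
        lintegral_mono fun s => by
          rw [← ENNReal.ofReal_add (invMulMajorant_nonneg hK.le (hρ0 _))
            (invMulMajorant_nonneg hK.le (hρ0 _))]
          exact ENNReal.ofReal_le_ofReal
            (one_div_mul_le_invMulMajorant_add hK (hρ0 _) (hρ0 _) (hsum s))
    _ = 2 * ∫⁻ s, F s ∂μ := by
        rw [lintegral_add_left hF, lintegral_add_right_eq_self F x, two_mul]

theorem lintegral_one_div_mul_ge (hρ : Measurable ρ) (hρ0 : ∀ t, 0 ≤ ρ t) (hnull : μ {t | ρ t = 0} = 0)
    (htri : ∀ a b, ρ (a + b) ≤ K * (ρ a + ρ b)) {x : E} (hx : ρ x ≤ 1) :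
    ENNReal.ofReal (1 / (2 * K)) * μ {t | ρ t ≤ 1} ≤
      ∫⁻ s, ENNReal.ofReal (1 / (ρ s * ρ (s + x))) ∂μ := by
  have hpos : ∀ᵐ s ∂μ, ρ s ≠ 0 := ae_iff.mpr (by simpa using hnull)
  have hpos' : ∀ᵐ s ∂μ, ρ (s + x) ≠ 0 :=
    (measurePreserving_add_right μ x).quasiMeasurePreserving.ae hpos
  have hbound : ∀ᵐ s ∂μ, s ∈ {t | ρ t ≤ 1} →
      ENNReal.ofReal (1 / (2 * K)) ≤ ENNReal.ofReal (1 / (ρ s * ρ (s + x))) := by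
    filter_upwards [hpos, hpos'] with s hs hsx (hs1 : ρ s ≤ 1)
    have hprod : 0 < ρ s * ρ (s + x) :=
      mul_pos ((hρ0 s).lt_of_ne' hs) ((hρ0 _).lt_of_ne' hsx)
    refine ENNReal.ofReal_le_ofReal (one_div_le_one_div_of_le hprod ?_)
    have htri' := htri s x
    have hK : 0 ≤ K := by
      by_contra! hK
      nlinarith [hρ0 s, hρ0 x, (hρ0 (s + x)).lt_of_ne' hsx]
    calc ρ s * ρ (s + x) ≤ 1 * ρ (s + x) := mul_le_mul_of_nonneg_right hs1 (hρ0 _)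
      _ ≤ 2 * K := by nlinarith
  calc ENNReal.ofReal (1 / (2 * K)) * μ {t | ρ t ≤ 1}
      = ∫⁻ _ in {t | ρ t ≤ 1}, ENNReal.ofReal (1 / (2 * K)) ∂μ := (setLIntegral_const _ _).symm
    _ ≤ ∫⁻ s in {t | ρ t ≤ 1}, ENNReal.ofReal (1 / (ρ s * ρ (s + x))) ∂μ :=
        setLIntegral_mono_ae' (measurableSet_le hρ measurable_const) hbound
    _ ≤ ∫⁻ s, ENNReal.ofReal (1 / (ρ s * ρ (s + x))) ∂μ := setLIntegral_le_lintegral _ _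

end QuasiNorm

lemma abs_add_rpow_le (u v : ℝ) {q : ℝ} (hq : 0 ≤ q) :
    |u + v| ^ q ≤ 2 ^ q * (|u| ^ q + |v| ^ q) := by
  wlog huv : |v| ≤ |u| generalizing u v
  · rw [add_comm u, add_comm (|u| ^ q)]
    exact this v u (le_of_not_ge huv)
  calc |u + v| ^ q ≤ (2 * |u|) ^ q :=
        Real.rpow_le_rpow (abs_nonneg _) ((abs_add_le u v).trans (by linarith)) hq
    _ = 2 ^ q * |u| ^ q := Real.mul_rpow zero_le_two (abs_nonneg u)
    _ ≤ 2 ^ q * (|u| ^ q + |v| ^ q) := by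
        gcongr
        exact le_add_of_nonneg_right (by positivity)

lemma abs_le_rpow_one_div_of_rpow_le {u q r : ℝ} (hq : 0 < q) (h : |u| ^ q ≤ r) :
    u ∈ Icc (-r ^ (1 / q)) (r ^ (1 / q)) := by
  have hr : 0 ≤ r := (Real.rpow_nonneg (abs_nonneg u) q).trans h
  rw [mem_Icc, ← abs_le, one_div]
  exact (Real.le_rpow_inv_iff_of_pos (abs_nonneg u) hr hq).mpr h

noncomputable def anisoGauge (q1 q2 q3 : ℝ) (t : ℝ × ℝ × ℝ) : ℝ :=
  |t.1| ^ q1 + |t.2.1| ^ q2 + |t.2.2| ^ q3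

namespace anisoGauge

variable {q1 q2 q3 : ℝ}

lemma nonneg (t : ℝ × ℝ × ℝ) : 0 ≤ anisoGauge q1 q2 q3 t := by
  unfold anisoGauge; positivity

lemma neg (t : ℝ × ℝ × ℝ) : anisoGauge q1 q2 q3 (-t) = anisoGauge q1 q2 q3 t := by
  simp [anisoGauge]

lemma eq_zero_iff (hq1 : q1 ≠ 0) (hq2 : q2 ≠ 0) (hq3 : q3 ≠ 0) {t : ℝ × ℝ × ℝ} :
    anisoGauge q1 q2 q3 t = 0 ↔ t = 0 := by
  rw [anisoGauge, add_eq_zero_iff_of_nonneg (by positivity) (by positivity),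
    add_eq_zero_iff_of_nonneg (by positivity) (by positivity)]
  simp [hq1, hq2, hq3, Prod.ext_iff, and_assoc]

lemma continuous (hq1 : 0 ≤ q1) (hq2 : 0 ≤ q2) (hq3 : 0 ≤ q3) :
    Continuous (anisoGauge q1 q2 q3) := by
  unfold anisoGauge
  fun_prop (disch := assumption)

lemma add_le (hq1 : 0 ≤ q1) (hq2 : 0 ≤ q2) (hq3 : 0 ≤ q3) (a b : ℝ × ℝ × ℝ) :
    anisoGauge q1 q2 q3 (a + b) ≤
      (2 ^ q1 + 2 ^ q2 + 2 ^ q3) * (anisoGauge q1 q2 q3 a + anisoGauge q1 q2 q3 b) := by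
  set A := anisoGauge q1 q2 q3 a + anisoGauge q1 q2 q3 b
  have coord {q : ℝ} (hq : 0 ≤ q) (u v : ℝ) (h : |u| ^ q + |v| ^ q ≤ A) :
      |u + v| ^ q ≤ 2 ^ q * A :=
    (abs_add_rpow_le u v hq).trans (mul_le_mul_of_nonneg_left h (by positivity))
  have h1 (t : ℝ × ℝ × ℝ) : |t.1| ^ q1 ≤ anisoGauge q1 q2 q3 t := by
    unfold anisoGauge; linarith [Real.rpow_nonneg (abs_nonneg t.2.1) q2,
      Real.rpow_nonneg (abs_nonneg t.2.2) q3]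
  have h2 (t : ℝ × ℝ × ℝ) : |t.2.1| ^ q2 ≤ anisoGauge q1 q2 q3 t := by
    unfold anisoGauge; linarith [Real.rpow_nonneg (abs_nonneg t.1) q1,
      Real.rpow_nonneg (abs_nonneg t.2.2) q3]
  have h3 (t : ℝ × ℝ × ℝ) : |t.2.2| ^ q3 ≤ anisoGauge q1 q2 q3 t := by
    unfold anisoGauge; linarith [Real.rpow_nonneg (abs_nonneg t.1) q1,
      Real.rpow_nonneg (abs_nonneg t.2.1) q2]
  calc anisoGauge q1 q2 q3 (a + b) ≤ 2 ^ q1 * A + 2 ^ q2 * A + 2 ^ q3 * A :=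
        add_le_add (add_le_add (coord hq1 _ _ (add_le_add (h1 a) (h1 b)))
          (coord hq2 _ _ (add_le_add (h2 a) (h2 b)))) (coord hq3 _ _ (add_le_add (h3 a) (h3 b)))
    _ = (2 ^ q1 + 2 ^ q2 + 2 ^ q3) * A := by ring

lemma volume_setOf_eq_zero (hq1 : q1 ≠ 0) (hq2 : q2 ≠ 0) (hq3 : q3 ≠ 0) :
    volume {t | anisoGauge q1 q2 q3 t = 0} = 0 := by
  simp_rw [eq_zero_iff hq1 hq2 hq3, ofPred_eq_eq_singleton]
  rw [Measure.volume_eq_prod]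
  exact measure_singleton _

lemma volume_setOf_le_one_pos (hq1 : 0 < q1) (hq2 : 0 < q2) (hq3 : 0 < q3) :
    0 < volume {t | anisoGauge q1 q2 q3 t ≤ 1} :=
  calc 0 < volume {t | anisoGauge q1 q2 q3 t < 1} :=
        (isOpen_lt (anisoGauge.continuous hq1.le hq2.le hq3.le) continuous_const).measure_pos
          volume ⟨0, show anisoGauge q1 q2 q3 0 < 1 by
            rw [(eq_zero_iff hq1.ne' hq2.ne' hq3.ne').mpr rfl]; exact one_pos⟩
    _ ≤ volume {t | anisoGauge q1 q2 q3 t ≤ 1} :=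
        measure_mono fun t (ht : anisoGauge q1 q2 q3 t < 1) => ht.le

lemma hasVolumeGrowth (hq1 : 0 < q1) (hq2 : 0 < q2) (hq3 : 0 < q3) :
    HasVolumeGrowth volume (anisoGauge q1 q2 q3) 8 (1 / q1 + 1 / q2 + 1 / q3) := by
  intro r hr
  have hbox : {t | anisoGauge q1 q2 q3 t ≤ r} ⊆ Icc (-r ^ (1 / q1)) (r ^ (1 / q1)) ×ˢ
      (Icc (-r ^ (1 / q2)) (r ^ (1 / q2)) ×ˢ Icc (-r ^ (1 / q3)) (r ^ (1 / q3))) := by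
    intro t (ht : anisoGauge q1 q2 q3 t ≤ r)
    have h1 := Real.rpow_nonneg (abs_nonneg t.1) q1
    have h2 := Real.rpow_nonneg (abs_nonneg t.2.1) q2
    have h3 := Real.rpow_nonneg (abs_nonneg t.2.2) q3
    unfold anisoGauge at ht
    exact ⟨abs_le_rpow_one_div_of_rpow_le hq1 (by linarith),
      abs_le_rpow_one_div_of_rpow_le hq2 (by linarith),
      abs_le_rpow_one_div_of_rpow_le hq3 (by linarith)⟩
  refine (measure_mono hbox).trans_eq ?_
  rw [Measure.volume_eq_prod, Measure.prod_prod, Measure.volume_eq_prod, Measure.prod_prod,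
    Real.volume_Icc, Real.volume_Icc, Real.volume_Icc, sub_neg_eq_add, sub_neg_eq_add,
    sub_neg_eq_add, ← ENNReal.ofReal_mul (by positivity),
    ← ENNReal.ofReal_mul (by positivity), Real.rpow_add hr, Real.rpow_add hr]
  ring_nf

end anisoGauge

theorem stmt_7 (q1 q2 q3 : ℝ) (hq1 : 0 < q1) (hq2 : 0 < q2) (hq3 : 0 < q3)
    (hQlow : 1 < 1 / q1 + 1 / q2 + 1 / q3)
    (hQup : 1 / q1 + 1 / q2 + 1 / q3 < 2)
    (ρ : ℝ × ℝ × ℝ → ℝ)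
    (hρ : ∀ t : ℝ × ℝ × ℝ, ρ t = |t.1| ^ q1 + |t.2.1| ^ q2 + |t.2.2| ^ q3) :
    ∃ C1 C2 : ℝ, 0 < C1 ∧ C1 ≤ C2 ∧
      ∀ x : ℝ × ℝ × ℝ, ρ x = 1 →
        ENNReal.ofReal C1 ≤ (∫⁻ s : ℝ × ℝ × ℝ, ENNReal.ofReal (1 / (ρ s * ρ (s + x)))) ∧
        (∫⁻ s : ℝ × ℝ × ℝ, ENNReal.ofReal (1 / (ρ s * ρ (s + x)))) ≤ ENNReal.ofReal C2 := by
  obtain rfl : ρ = anisoGauge q1 q2 q3 := funext hρ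
  -- instance search does not unfold `volume` on a product
  have : (volume : Measure (ℝ × ℝ × ℝ)).IsAddRightInvariant := by
    rw [Measure.volume_eq_prod]; infer_instance
  have hcont := anisoGauge.continuous hq1.le hq2.le hq3.le
  have htri := anisoGauge.add_le hq1.le hq2.le hq3.le
  set K : ℝ := 2 ^ q1 + 2 ^ q2 + 2 ^ q3
  have hK : 0 < K := by positivity
  have hvol := anisoGauge.hasVolumeGrowth hq1 hq2 hq3
  obtain ⟨C, hC, hup⟩ := hvol.exists_lintegral_one_div_mul_le hcont.measurable anisoGauge.nonneg
    anisoGauge.neg htri hK hQlow hQup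
  set V := volume {t | anisoGauge q1 q2 q3 t ≤ 1}
  have hV0 : 0 < V := anisoGauge.volume_setOf_le_one_pos hq1 hq2 hq3
  have hVtop : V ≠ ⊤ := ((hvol 1 one_pos).trans_lt ENNReal.ofReal_lt_top).ne
  refine ⟨1 / (2 * K) * V.toReal, max (1 / (2 * K) * V.toReal) C.toReal,
    mul_pos (by positivity) (ENNReal.toReal_pos hV0.ne' hVtop), le_max_left _ _,
    fun x hx => ⟨?_, ?_⟩⟩
  · rw [ENNReal.ofReal_mul (by positivity), ENNReal.ofReal_toReal hVtop]
    exact lintegral_one_div_mul_ge hcont.measurable anisoGauge.nonneg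
      (anisoGauge.volume_setOf_eq_zero hq1.ne' hq2.ne' hq3.ne') htri hx.le
  · rw [← ENNReal.ofReal_toReal hC] at hup
    exact (hup x hx).trans (ENNReal.ofReal_le_ofReal (le_max_right _ _))
end

section
/- Assume additionally 1 < 1/(2q1) + 1/(2q2) + 1/q3 (Region III). Then Σ_{t3∈ℤ} |r(0,0,t3)| = ∞. -/
/-!
Write `a = g · K` with `K s = (c₁|s₁|₊^{q₁/ν} + c₂|s₂|₊^{q₂/ν} + c₃|s₃|₊^{q₃/ν})^{-ν}`. Since
`Q < 2`, `K` is square summable, so every `r v = ∑ a s a (v + s)` converges absolutely. Off a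
finite set `F` we have `g > 1/2`, so for `v = (0, 0, t)` each term with `s, v + s ∉ F` is at least
`K s K (v + s) / 4`; the remaining terms are indexed by `F ∪ (F - v)`, and each is `O(t^{-q₃})`
because one of `s`, `v + s` has third coordinate of size about `t`. On the box
`[0, t^{q₃/q₁}] × [0, t^{q₃/q₂}] × [0, t]` both `K s` and `K (v + s)` are `≳ t^{-q₃}`, hence
`r (0, 0, t) ≳ t^β - O(t^{-q₃})` with `β = q₃/q₁ + q₃/q₂ + 1 - 2q₃`. Now `β > -q₃` because
`Q > 1`, and `β > -1` is exactly Region III, so `r (0, 0, t) ≳ t^β` is not summable.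
-/

open Filter Asymptotics Finset Function

noncomputable def absPlus (n : ℤ) : ℝ := max |(n : ℝ)| 1

lemma one_le_absPlus (n : ℤ) : 1 ≤ absPlus n := le_max_right _ _

lemma absPlus_pos (n : ℤ) : 0 < absPlus n := one_pos.trans_le (one_le_absPlus n)

lemma absPlus_neg (n : ℤ) : absPlus (-n) = absPlus n := by
  simp [absPlus]

lemma summable_absPlus_rpow_neg {p : ℝ} (hp : 1 < p) :
    Summable fun n : ℤ => absPlus n ^ (-p) := by
  refine (Real.summable_abs_int_rpow hp).of_norm_bounded_eventually ?_
  filter_upwards [eventually_cofinite_ne 0] with n hn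
  have h1 : (1 : ℝ) ≤ |(n : ℝ)| := by
    rw [← Int.cast_abs]; exact_mod_cast Int.one_le_abs hn
  rw [Real.norm_of_nonneg (Real.rpow_nonneg (absPlus_pos n).le _), absPlus,
    max_eq_left h1]

lemma summable_mul_absPlus_rpow_neg_rpow {C q a : ℝ} (hC : 0 ≤ C) (hqa : 1 < q * a) :
    Summable fun n : ℤ => (C * absPlus n ^ (-q)) ^ a := by
  refine ((summable_absPlus_rpow_neg hqa).mul_left (C ^ a)).congr fun n => ?_
  rw [Real.mul_rpow hC (Real.rpow_nonneg (absPlus_pos n).le _), ← Real.rpow_mul (absPlus_pos n).le,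
    neg_mul]

lemma summable_triple_mul_of_nonneg {f₁ f₂ f₃ : ℤ → ℝ} (h₁ : Summable f₁) (h₂ : Summable f₂)
    (h₃ : Summable f₃) (h₁' : 0 ≤ f₁) (h₂' : 0 ≤ f₂) (h₃' : 0 ≤ f₃) :
    Summable fun s : ℤ × ℤ × ℤ => f₁ s.1 * (f₂ s.2.1 * f₃ s.2.2) :=
  h₁.mul_of_nonneg (h₂.mul_of_nonneg h₃ h₂' h₃') h₁' fun _ => mul_nonneg (h₂' _) (h₃' _)

lemma rpow_add_add_le_mul_mul {x b₁ b₂ b₃ a₁ a₂ a₃ : ℝ} (hx : 0 < x)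
    (h₁ : x ≤ b₁) (h₂ : x ≤ b₂) (h₃ : x ≤ b₃) (ha₁ : 0 ≤ a₁) (ha₂ : 0 ≤ a₂) (ha₃ : 0 ≤ a₃) :
    x ^ (a₁ + a₂ + a₃) ≤ b₁ ^ a₁ * (b₂ ^ a₂ * b₃ ^ a₃) := by
  have := hx.trans_le h₁
  have := hx.trans_le h₂
  rw [Real.rpow_add hx, Real.rpow_add hx, mul_assoc]
  gcongr

lemma inv_rpow_le_mul_rpow_neg {c m q ν S : ℝ} (hc : 0 < c) (hm : 0 < m) (hν : 0 < ν)
    (h : c * m ^ (q / ν) ≤ S) : (S ^ ν)⁻¹ ≤ (c ^ ν)⁻¹ * m ^ (-q) := by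
  have hx : 0 < c * m ^ (q / ν) := by positivity
  calc (S ^ ν)⁻¹ ≤ ((c * m ^ (q / ν)) ^ ν)⁻¹ :=
        inv_anti₀ (by positivity) (Real.rpow_le_rpow hx.le h hν.le)
    _ = (c ^ ν)⁻¹ * m ^ (-q) := by
        rw [Real.mul_rpow hc.le (by positivity), ← Real.rpow_mul hm.le, div_mul_cancel₀ _ hν.ne',
          mul_inv, Real.rpow_neg hm.le]

lemma summable_mul_comp_of_summable_sq {α : Type*} {f : α → ℝ} (hf : Summable fun s => f s ^ 2)
    {e : α → α} (he : Injective e) : Summable fun s => f s * f (e s) := by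
  refine .of_norm_bounded ((hf.add (hf.comp_injective he)).div_const 2) fun s => ?_
  have := two_mul_le_add_sq |f s| |f (e s)|
  rw [sq_abs, sq_abs] at this
  rw [Real.norm_eq_abs, abs_mul]
  simp only [comp_apply]
  linarith

lemma isLittleO_rpow_rpow_atTop {a b : ℝ} (h : a < b) :
    (fun x : ℝ => x ^ a) =o[atTop] fun x => x ^ b := by
  rw [isLittleO_iff_tendsto' ((eventually_gt_atTop 0).mono fun x hx h => absurd h (by positivity))]
  refine (tendsto_rpow_neg_atTop (sub_pos.mpr h)).congr' ?_
  filter_upwards [eventually_gt_atTop 0] with x hx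
  rw [← Real.rpow_sub hx, neg_sub]

lemma not_summable_of_rpow_sub_isLittleO_le {u E : ℕ → ℝ} {C β : ℝ} (hC : 0 < C) (hβ : -1 ≤ β)
    (hE : E =o[atTop] fun t => (t : ℝ) ^ β) (hu : ∀ᶠ t : ℕ in atTop, C * (t : ℝ) ^ β - E t ≤ u t) :
    ¬ Summable u := by
  intro hsum
  have hbound : ∀ᶠ t : ℕ in cofinite, ‖C / 2 * (t : ℝ) ^ β‖ ≤ |u t| := by
    rw [Nat.cofinite_eq_atTop]
    filter_upwards [hu, hE.bound (half_pos hC)] with t hut hEt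
    have hpow : 0 ≤ (t : ℝ) ^ β := by positivity
    rw [Real.norm_eq_abs, Real.norm_of_nonneg hpow] at hEt
    rw [Real.norm_of_nonneg (by positivity)]
    linarith [le_abs_self (u t), le_abs_self (E t)]
  have := (summable_mul_left_iff (half_pos hC).ne').mp (hsum.abs.of_norm_bounded_eventually hbound)
  linarith [Real.summable_nat_rpow.mp this]

lemma sum_union_image_sub_le {α : Type*} [AddCommGroup α] [DecidableEq α] {P : α → ℝ}
    (hP : ∀ s, 0 ≤ P s) (F : Finset α) (v : α) :
    ∑ s ∈ F ∪ F.image (· - v), P s ≤ ∑ f ∈ F, (P f + P (f - v)) := by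
  have hunion := sum_union_inter (s₁ := F) (s₂ := F.image (· - v)) (f := P)
  rw [sum_image sub_left_injective.injOn] at hunion
  have hinter := sum_nonneg fun s (_ : s ∈ F ∩ F.image (· - v)) => hP s
  rw [sum_add_distrib]
  linarith

/-- Terms with `s, v + s ∉ F` are `≥ D s D (v + s) / 4`; the others, indexed by `F ∪ (F - v)`,
are `≥ -M² D s D (v + s)`. -/
lemma sum_sub_sum_le_tsum_mul_shift {α : Type*} [AddCommGroup α] {g D : α → ℝ} {M : ℝ} (v : α)
    (B F : Finset α) (hD : ∀ s, 0 ≤ D s) (hg : ∀ s, |g s| ≤ M) (hF : ∀ s ∉ F, 1 / 2 < g s)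
    (hsum : Summable fun s => g s * D s * (g (v + s) * D (v + s))) :
    (∑ s ∈ B, D s * D (v + s)) / 4 - (M ^ 2 + 1 / 4) * ∑ f ∈ F, D f * (D (v + f) + D (f - v)) ≤
      ∑' s, g s * D s * (g (v + s) * D (v + s)) := by
  classical
  set P : α → ℝ := fun s => D s * D (v + s)
  have hP : ∀ s, 0 ≤ P s := fun s => mul_nonneg (hD s) (hD (v + s))
  set bad := F ∪ F.image (· - v)
  have hbad : ∑ s ∈ bad, P s ≤ ∑ f ∈ F, D f * (D (v + f) + D (f - v)) :=
    (sum_union_image_sub_le hP F v).trans_eq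
      (sum_congr rfl fun f _ => by simp only [P, add_sub_cancel]; ring)
  have hM : 0 ≤ M := (abs_nonneg _).trans (hg v)
  have hA : ∀ s, g s * D s * (g (v + s) * D (v + s)) = g s * g (v + s) * P s := fun s => by ring
  have hlow : ∀ s, -M ^ 2 * P s ≤ g s * g (v + s) * P s := fun s => by
    have : |g s * g (v + s)| ≤ M ^ 2 := by
      rw [abs_mul, sq]; exact mul_le_mul (hg s) (hg _) (abs_nonneg _) hM
    nlinarith [neg_abs_le (g s * g (v + s)), hP s]
  have hgood : ∀ s ∉ bad, P s / 4 ≤ g s * g (v + s) * P s := fun s hs => by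
    have hs₁ : s ∉ F := fun h => hs (mem_union_left _ h)
    have hs₂ : v + s ∉ F := fun h => hs (mem_union_right _ (mem_image.mpr ⟨v + s, h, by abel⟩))
    have hgg : 1 / 4 ≤ g s * g (v + s) := by nlinarith [hF s hs₁, hF _ hs₂]
    nlinarith [mul_le_mul_of_nonneg_right hgg (hP s)]
  have hpt : ∀ s, (B : Set α).indicator P s / 4 - (M ^ 2 + 1 / 4) * (bad : Set α).indicator P s ≤
      g s * D s * (g (v + s) * D (v + s)) := fun s => by
    have hBle : (B : Set α).indicator P s ≤ P s := Set.indicator_le_self' (fun s _ => hP s) s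
    rw [hA]
    by_cases hs : s ∈ bad
    · rw [Set.indicator_of_mem (mem_coe.mpr hs)]
      linarith [hlow s]
    · rw [Set.indicator_of_notMem (s := (bad : Set α)) (mt mem_coe.mp hs)]
      linarith [hgood s hs]
  have hle := hasSum_le hpt
    (((hasSum_subtype_iff_indicator.mp (B.hasSum P)).div_const 4).sub
      ((hasSum_subtype_iff_indicator.mp (bad.hasSum P)).mul_left (M ^ 2 + 1 / 4))) hsum.hasSum
  have := mul_le_mul_of_nonneg_left hbad (by positivity : (0 : ℝ) ≤ M ^ 2 + 1 / 4)
  linarith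

lemma le_card_Icc_floor (x : ℝ) : x ≤ #(Icc (0 : ℤ) ⌊x⌋₊) := by
  simpa [Int.card_Icc] using (Nat.lt_floor_add_one x).le

lemma absPlus_le_of_mem_Icc_floor {x : ℝ} (hx : 1 ≤ x) {n : ℤ} (hn : n ∈ Icc (0 : ℤ) ⌊x⌋₊) :
    absPlus n ≤ x := by
  rw [mem_Icc] at hn
  refine max_le ?_ hx
  rw [abs_of_nonneg (by exact_mod_cast hn.1)]
  calc (n : ℝ) ≤ (⌊x⌋₊ : ℤ) := by exact_mod_cast hn.2
    _ ≤ x := by push_cast; exact Nat.floor_le (by linarith)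

noncomputable def anisoBox (q₁ q₂ q₃ : ℝ) (t : ℕ) : Finset (ℤ × ℤ × ℤ) :=
  Icc (0 : ℤ) ⌊(t : ℝ) ^ (q₃ / q₁)⌋₊ ×ˢ Icc (0 : ℤ) ⌊(t : ℝ) ^ (q₃ / q₂)⌋₊ ×ˢ Icc (0 : ℤ) t

lemma le_card_anisoBox (q₁ q₂ q₃ : ℝ) (t : ℕ) :
    (t : ℝ) ^ (q₃ / q₁) * ((t : ℝ) ^ (q₃ / q₂) * t) ≤ #(anisoBox q₁ q₂ q₃ t) := by
  simp only [anisoBox, card_product]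
  push_cast
  gcongr
  · exact le_card_Icc_floor _
  · exact le_card_Icc_floor _
  · simp

noncomputable def corrExponent (q₁ q₂ q₃ : ℝ) : ℝ := q₃ / q₁ + q₃ / q₂ + 1 - 2 * q₃

lemma neg_lt_corrExponent {q₁ q₂ q₃ : ℝ} (hq₁ : 0 < q₁) (hq₂ : 0 < q₂) (hq₃ : 0 < q₃)
    (hQ : 1 < 1 / q₁ + 1 / q₂ + 1 / q₃) : -q₃ < corrExponent q₁ q₂ q₃ := by
  have e : q₃ * (1 / q₁ + 1 / q₂ + 1 / q₃) = q₃ / q₁ + q₃ / q₂ + 1 := by field_simp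
  unfold corrExponent
  nlinarith [mul_lt_mul_of_pos_left hQ hq₃]

lemma neg_one_lt_corrExponent {q₁ q₂ q₃ : ℝ} (hq₁ : 0 < q₁) (hq₂ : 0 < q₂) (hq₃ : 0 < q₃)
    (h : 1 < 1 / (2 * q₁) + 1 / (2 * q₂) + 1 / q₃) : -1 < corrExponent q₁ q₂ q₃ := by
  have e : 2 * q₃ * (1 / (2 * q₁) + 1 / (2 * q₂) + 1 / q₃) = q₃ / q₁ + q₃ / q₂ + 2 := by
    field_simp
  unfold corrExponent
  nlinarith [mul_lt_mul_of_pos_left h (by positivity : 0 < 2 * q₃)]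

section AnisotropicKernel

variable {q₁ q₂ q₃ c₁ c₂ c₃ ν : ℝ}

noncomputable def anisoNorm (q₁ q₂ q₃ c₁ c₂ c₃ ν : ℝ) (s : ℤ × ℤ × ℤ) : ℝ :=
  c₁ * absPlus s.1 ^ (q₁ / ν) + c₂ * absPlus s.2.1 ^ (q₂ / ν) + c₃ * absPlus s.2.2 ^ (q₃ / ν)

noncomputable def anisoKernel (q₁ q₂ q₃ c₁ c₂ c₃ ν : ℝ) (s : ℤ × ℤ × ℤ) : ℝ :=
  (anisoNorm q₁ q₂ q₃ c₁ c₂ c₃ ν s ^ ν)⁻¹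

local notation "N" => anisoNorm q₁ q₂ q₃ c₁ c₂ c₃ ν
local notation "K" => anisoKernel q₁ q₂ q₃ c₁ c₂ c₃ ν

lemma anisoKernel_neg (s : ℤ × ℤ × ℤ) : K (-s) = K s := by
  simp [anisoKernel, anisoNorm, absPlus_neg]

lemma anisoNorm_pos (hc₁ : 0 < c₁) (hc₂ : 0 < c₂) (hc₃ : 0 < c₃) (s : ℤ × ℤ × ℤ) : 0 < N s := by
  have := absPlus_pos s.1
  have := absPlus_pos s.2.1
  have := absPlus_pos s.2.2
  unfold anisoNorm
  positivity

lemma anisoKernel_pos (hc₁ : 0 < c₁) (hc₂ : 0 < c₂) (hc₃ : 0 < c₃) (s : ℤ × ℤ × ℤ) : 0 < K s :=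
  inv_pos.mpr (Real.rpow_pos_of_pos (anisoNorm_pos hc₁ hc₂ hc₃ s) ν)

lemma anisoKernel_le_fst (hc₁ : 0 < c₁) (hc₂ : 0 < c₂) (hc₃ : 0 < c₃) (hν : 0 < ν)
    (s : ℤ × ℤ × ℤ) : K s ≤ (c₁ ^ ν)⁻¹ * absPlus s.1 ^ (-q₁) := by
  have := absPlus_pos s.2.1
  have := absPlus_pos s.2.2
  refine inv_rpow_le_mul_rpow_neg hc₁ (absPlus_pos _) hν ?_
  unfold anisoNorm
  linarith [show 0 ≤ c₂ * absPlus s.2.1 ^ (q₂ / ν) + c₃ * absPlus s.2.2 ^ (q₃ / ν) by positivity]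

lemma anisoKernel_le_snd_fst (hc₁ : 0 < c₁) (hc₂ : 0 < c₂) (hc₃ : 0 < c₃) (hν : 0 < ν)
    (s : ℤ × ℤ × ℤ) : K s ≤ (c₂ ^ ν)⁻¹ * absPlus s.2.1 ^ (-q₂) := by
  have := absPlus_pos s.1
  have := absPlus_pos s.2.2
  refine inv_rpow_le_mul_rpow_neg hc₂ (absPlus_pos _) hν ?_
  unfold anisoNorm
  linarith [show 0 ≤ c₁ * absPlus s.1 ^ (q₁ / ν) + c₃ * absPlus s.2.2 ^ (q₃ / ν) by positivity]

lemma anisoKernel_le_snd_snd (hc₁ : 0 < c₁) (hc₂ : 0 < c₂) (hc₃ : 0 < c₃) (hν : 0 < ν)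
    (s : ℤ × ℤ × ℤ) : K s ≤ (c₃ ^ ν)⁻¹ * absPlus s.2.2 ^ (-q₃) := by
  have := absPlus_pos s.1
  have := absPlus_pos s.2.1
  refine inv_rpow_le_mul_rpow_neg hc₃ (absPlus_pos _) hν ?_
  unfold anisoNorm
  linarith [show 0 ≤ c₁ * absPlus s.1 ^ (q₁ / ν) + c₂ * absPlus s.2.1 ^ (q₂ / ν) by positivity]

/-- Write `K² = K^{a₁} K^{a₂} K^{a₃}` with `aᵢ = 1/qᵢ + (2 - Q)/3` and bound the `i`-th factor by
the decay of `K` in the `i`-th coordinate; `qᵢ aᵢ > 1` makes the majorant summable. -/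
lemma summable_anisoKernel_sq (hq₁ : 0 < q₁) (hq₂ : 0 < q₂) (hq₃ : 0 < q₃)
    (hc₁ : 0 < c₁) (hc₂ : 0 < c₂) (hc₃ : 0 < c₃) (hν : 0 < ν)
    (hQ : 1 / q₁ + 1 / q₂ + 1 / q₃ < 2) : Summable fun s => K s ^ 2 := by
  set ε := (2 - (1 / q₁ + 1 / q₂ + 1 / q₃)) / 3
  have hε : 0 < ε := by positivity
  have hexp : ∀ q, 0 < q → 1 < q * (1 / q + ε) := fun q hq => by
    rw [mul_add, mul_one_div_cancel hq.ne']; nlinarith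
  have hsum : (1 / q₁ + ε) + (1 / q₂ + ε) + (1 / q₃ + ε) = ((2 : ℕ) : ℝ) := by
    push_cast; ring
  refine .of_nonneg_of_le (fun s => sq_nonneg _) (fun s => ?_)
    (summable_triple_mul_of_nonneg
      (summable_mul_absPlus_rpow_neg_rpow (C := (c₁ ^ ν)⁻¹) (by positivity) (hexp q₁ hq₁))
      (summable_mul_absPlus_rpow_neg_rpow (C := (c₂ ^ ν)⁻¹) (by positivity) (hexp q₂ hq₂))
      (summable_mul_absPlus_rpow_neg_rpow (C := (c₃ ^ ν)⁻¹) (by positivity) (hexp q₃ hq₃))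
      (fun n => by have := absPlus_pos n; positivity)
      (fun n => by have := absPlus_pos n; positivity)
      (fun n => by have := absPlus_pos n; positivity))
  rw [← Real.rpow_natCast, ← hsum]
  exact rpow_add_add_le_mul_mul (anisoKernel_pos hc₁ hc₂ hc₃ s)
    (anisoKernel_le_fst hc₁ hc₂ hc₃ hν s) (anisoKernel_le_snd_fst hc₁ hc₂ hc₃ hν s)
    (anisoKernel_le_snd_snd hc₁ hc₂ hc₃ hν s) (by positivity) (by positivity) (by positivity)

lemma inv_le_anisoKernel (hc₁ : 0 < c₁) (hc₂ : 0 < c₂) (hc₃ : 0 < c₃) (hν : 0 < ν)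
    {s : ℤ × ℤ × ℤ} {L : ℝ}
    (h₁ : absPlus s.1 ^ q₁ ≤ L) (h₂ : absPlus s.2.1 ^ q₂ ≤ L) (h₃ : absPlus s.2.2 ^ q₃ ≤ L) :
    ((c₁ + c₂ + c₃) ^ ν * L)⁻¹ ≤ K s := by
  have hL : 0 < L := (Real.rpow_pos_of_pos (absPlus_pos s.1) q₁).trans_le h₁
  have hroot : ∀ n : ℤ, ∀ q, absPlus n ^ q ≤ L → absPlus n ^ (q / ν) ≤ L ^ ν⁻¹ := fun n q h => by
    rw [div_eq_mul_inv, Real.rpow_mul (absPlus_pos n).le]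
    exact Real.rpow_le_rpow (by have := absPlus_pos n; positivity) h (by positivity)
  have hN : N s ≤ (c₁ + c₂ + c₃) * L ^ ν⁻¹ := by
    have e₁ := mul_le_mul_of_nonneg_left (hroot _ _ h₁) hc₁.le
    have e₂ := mul_le_mul_of_nonneg_left (hroot _ _ h₂) hc₂.le
    have e₃ := mul_le_mul_of_nonneg_left (hroot _ _ h₃) hc₃.le
    unfold anisoNorm
    linarith
  have hNpos : 0 < N s := anisoNorm_pos hc₁ hc₂ hc₃ s
  calc ((c₁ + c₂ + c₃) ^ ν * L)⁻¹ = (((c₁ + c₂ + c₃) * L ^ ν⁻¹) ^ ν)⁻¹ := by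
        rw [Real.mul_rpow (by positivity) (by positivity), ← Real.rpow_mul hL.le,
          inv_mul_cancel₀ hν.ne', Real.rpow_one]
    _ ≤ K s := inv_anti₀ (by positivity) (Real.rpow_le_rpow hNpos.le hN hν.le)

lemma anisoKernel_shift_isBigO (hc₁ : 0 < c₁) (hc₂ : 0 < c₂) (hc₃ : 0 < c₃) (hν : 0 < ν)
    (hq₃ : 0 < q₃) (f : ℤ × ℤ × ℤ) :
    (fun t : ℕ => K ((0, 0, (t : ℤ)) + f)) =O[atTop] fun t => (t : ℝ) ^ (-q₃) := by
  refine .of_bound ((c₃ ^ ν)⁻¹ * 2 ^ q₃) ?_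
  filter_upwards [eventually_ge_atTop (2 * f.2.2.natAbs), eventually_gt_atTop 0] with t ht ht₀
  have hT : (0 : ℝ) < t := by exact_mod_cast ht₀
  have hf : |(f.2.2 : ℝ)| ≤ t / 2 := by
    have h := (Nat.cast_le (α := ℝ)).mpr ht
    push_cast [Nat.cast_natAbs, Int.cast_abs] at h
    linarith
  have hhalf : (t : ℝ) / 2 ≤ absPlus ((t : ℤ) + f.2.2) := by
    refine le_trans ?_ (le_max_left _ _)
    push_cast
    have := neg_abs_le (f.2.2 : ℝ)
    rw [abs_of_nonneg (by linarith)]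
    linarith
  rw [Real.norm_of_nonneg (anisoKernel_pos hc₁ hc₂ hc₃ _).le,
    Real.norm_of_nonneg (by positivity)]
  calc K ((0, 0, (t : ℤ)) + f) ≤ (c₃ ^ ν)⁻¹ * absPlus ((t : ℤ) + f.2.2) ^ (-q₃) := by
        exact anisoKernel_le_snd_snd hc₁ hc₂ hc₃ hν _
    _ ≤ (c₃ ^ ν)⁻¹ * ((t : ℝ) / 2) ^ (-q₃) :=
        mul_le_mul_of_nonneg_left
          (Real.rpow_le_rpow_of_nonpos (by positivity) hhalf (by linarith)) (by positivity)
    _ = (c₃ ^ ν)⁻¹ * 2 ^ q₃ * (t : ℝ) ^ (-q₃) := by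
        rw [Real.div_rpow hT.le zero_le_two, Real.rpow_neg zero_le_two, div_inv_eq_mul]
        ring


lemma summable_mul_anisoKernel_mul_shift (hq₁ : 0 < q₁) (hq₂ : 0 < q₂) (hq₃ : 0 < q₃)
    (hc₁ : 0 < c₁) (hc₂ : 0 < c₂) (hc₃ : 0 < c₃) (hν : 0 < ν)
    (hQ : 1 / q₁ + 1 / q₂ + 1 / q₃ < 2) {g : ℤ × ℤ × ℤ → ℝ} {M : ℝ} (hg : ∀ s, |g s| ≤ M)
    (v : ℤ × ℤ × ℤ) : Summable fun s => g s * K s * (g (v + s) * K (v + s)) := by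
  refine summable_mul_comp_of_summable_sq (f := fun s => g s * K s)
    (.of_nonneg_of_le (fun s => sq_nonneg _) (fun s => ?_)
      ((summable_anisoKernel_sq hq₁ hq₂ hq₃ hc₁ hc₂ hc₃ hν hQ).mul_left (M ^ 2)))
    (add_right_injective v)
  rw [mul_pow, ← sq_abs (g s)]
  exact mul_le_mul_of_nonneg_right (pow_le_pow_left₀ (abs_nonneg _) (hg s) 2) (sq_nonneg _)

lemma sum_anisoKernel_mul_shift_isLittleO (hc₁ : 0 < c₁) (hc₂ : 0 < c₂) (hc₃ : 0 < c₃)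
    (hν : 0 < ν) (hq₃ : 0 < q₃) (F : Finset (ℤ × ℤ × ℤ)) {β : ℝ} (hβ : -q₃ < β) :
    (fun t : ℕ => ∑ f ∈ F, K f * (K ((0, 0, (t : ℤ)) + f) + K (f - (0, 0, (t : ℤ)))))
      =o[atTop] fun t => (t : ℝ) ^ β := by
  refine IsBigO.trans_isLittleO (IsBigO.fun_sum fun f _ => IsBigO.const_mul_left ?_ (K f))
    ((isLittleO_rpow_rpow_atTop hβ).comp_tendsto tendsto_natCast_atTop_atTop)
  refine (anisoKernel_shift_isBigO hc₁ hc₂ hc₃ hν hq₃ f).add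
    ((anisoKernel_shift_isBigO (q₁ := q₁) (q₂ := q₂) hc₁ hc₂ hc₃ hν hq₃ (-f)).congr_left
      fun t => ?_)
  rw [show (0, 0, (t : ℤ)) + -f = -(f - (0, 0, (t : ℤ))) by abel]
  exact anisoKernel_neg _

lemma inv_sq_le_anisoKernel_mul_shift (hq₁ : 0 < q₁) (hq₂ : 0 < q₂) (hq₃ : 0 < q₃)
    (hc₁ : 0 < c₁) (hc₂ : 0 < c₂) (hc₃ : 0 < c₃) (hν : 0 < ν) {t : ℕ} (ht : 1 ≤ t)
    {s : ℤ × ℤ × ℤ} (hs : s ∈ anisoBox q₁ q₂ q₃ t) :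
    ((c₁ + c₂ + c₃) ^ ν * (2 * t) ^ q₃)⁻¹ ^ 2 ≤ K s * K ((0, 0, (t : ℤ)) + s) := by
  have hT : (1 : ℝ) ≤ t := by exact_mod_cast ht
  have hTL : (t : ℝ) ^ q₃ ≤ (2 * t) ^ q₃ := Real.rpow_le_rpow (by positivity) (by linarith) hq₃.le
  have hside : ∀ q, 0 < q → ∀ n ∈ Icc (0 : ℤ) ⌊(t : ℝ) ^ (q₃ / q)⌋₊,
      absPlus n ^ q ≤ (2 * t) ^ q₃ := by
    intro q hq n hn
    have h := absPlus_le_of_mem_Icc_floor (Real.one_le_rpow hT (by positivity)) hn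
    calc absPlus n ^ q ≤ ((t : ℝ) ^ (q₃ / q)) ^ q :=
          Real.rpow_le_rpow (absPlus_pos n).le h hq.le
      _ = (t : ℝ) ^ q₃ := by rw [← Real.rpow_mul (by positivity), div_mul_cancel₀ _ hq.ne']
      _ ≤ (2 * t) ^ q₃ := hTL
  simp only [anisoBox, mem_product] at hs
  obtain ⟨h₁, h₂, h₃⟩ := hs
  have h₃' : absPlus s.2.2 ≤ t := absPlus_le_of_mem_Icc_floor hT (by rwa [Nat.floor_natCast])
  have h₃'' : absPlus ((t : ℤ) + s.2.2) ≤ 2 * t := by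
    rw [mem_Icc] at h₃
    refine max_le ?_ (by linarith)
    have h0 : (0 : ℝ) ≤ s.2.2 := by exact_mod_cast h₃.1
    have h1 : (s.2.2 : ℝ) ≤ t := by exact_mod_cast h₃.2
    push_cast
    rw [abs_of_nonneg (by positivity)]
    linarith
  rw [sq]
  refine mul_le_mul ?_ ?_ (by positivity) (anisoKernel_pos hc₁ hc₂ hc₃ s).le
  · exact inv_le_anisoKernel hc₁ hc₂ hc₃ hν (hside q₁ hq₁ _ h₁) (hside q₂ hq₂ _ h₂)
      ((Real.rpow_le_rpow (absPlus_pos _).le h₃' hq₃.le).trans hTL)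
  · exact inv_le_anisoKernel hc₁ hc₂ hc₃ hν (by simpa using hside q₁ hq₁ _ h₁)
      (by simpa using hside q₂ hq₂ _ h₂) (Real.rpow_le_rpow (absPlus_pos _).le h₃'' hq₃.le)

lemma le_sum_anisoKernel_mul_shift (hq₁ : 0 < q₁) (hq₂ : 0 < q₂) (hq₃ : 0 < q₃)
    (hc₁ : 0 < c₁) (hc₂ : 0 < c₂) (hc₃ : 0 < c₃) (hν : 0 < ν) {t : ℕ} (ht : 1 ≤ t) :
    ((c₁ + c₂ + c₃) ^ ν * 2 ^ q₃)⁻¹ ^ 2 * (t : ℝ) ^ corrExponent q₁ q₂ q₃ ≤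
      ∑ s ∈ anisoBox q₁ q₂ q₃ t, K s * K ((0, 0, (t : ℤ)) + s) := by
  have hT₀ : (0 : ℝ) < t := by exact_mod_cast ht
  calc ((c₁ + c₂ + c₃) ^ ν * 2 ^ q₃)⁻¹ ^ 2 * (t : ℝ) ^ corrExponent q₁ q₂ q₃
      = (t : ℝ) ^ (q₃ / q₁) * ((t : ℝ) ^ (q₃ / q₂) * t) *
          ((c₁ + c₂ + c₃) ^ ν * (2 * t) ^ q₃)⁻¹ ^ 2 := by
        rw [corrExponent, Real.mul_rpow zero_le_two hT₀.le, Real.rpow_sub hT₀, Real.rpow_add hT₀,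
          Real.rpow_add hT₀, Real.rpow_one, show 2 * q₃ = q₃ * (2 : ℕ) by push_cast; ring,
          Real.rpow_mul_natCast hT₀.le]
        field_simp
    _ ≤ #(anisoBox q₁ q₂ q₃ t) * ((c₁ + c₂ + c₃) ^ ν * (2 * t) ^ q₃)⁻¹ ^ 2 := by
        gcongr
        exact le_card_anisoBox q₁ q₂ q₃ t
    _ ≤ ∑ s ∈ anisoBox q₁ q₂ q₃ t, K s * K ((0, 0, (t : ℤ)) + s) := by
        rw [← nsmul_eq_mul]
        exact card_nsmul_le_sum _ _ _
          fun s hs => inv_sq_le_anisoKernel_mul_shift hq₁ hq₂ hq₃ hc₁ hc₂ hc₃ hν ht hs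

end AnisotropicKernel

theorem stmt_11 (q1 q2 q3 c1 c2 c3 ν : ℝ)
    (hq1 : 0 < q1) (hq2 : 0 < q2) (hq3 : 0 < q3)
    (hc1 : 0 < c1) (hc2 : 0 < c2) (hc3 : 0 < c3) (hν : 0 < ν)
    (g : ℤ × ℤ × ℤ → ℝ) (hg : ∃ M : ℝ, ∀ t, |g t| ≤ M)
    (hg1 : Tendsto g cofinite (nhds 1))
    (a : ℤ × ℤ × ℤ → ℝ)
    (ha : ∀ t : ℤ × ℤ × ℤ, a t = g t /
      (c1 * (max |(t.1 : ℝ)| 1) ^ (q1 / ν) + c2 * (max |(t.2.1 : ℝ)| 1) ^ (q2 / ν) +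
        c3 * (max |(t.2.2 : ℝ)| 1) ^ (q3 / ν)) ^ ν)
    (hQlow : 1 < 1 / q1 + 1 / q2 + 1 / q3)
    (hQup : 1 / q1 + 1 / q2 + 1 / q3 < 2)
    (r : ℤ × ℤ × ℤ → ℝ)
    (hr : ∀ t : ℤ × ℤ × ℤ, r t = ∑' s : ℤ × ℤ × ℤ, a s * a (t + s))
    (hRegion : 1 < 1 / (2 * q1) + 1 / (2 * q2) + 1 / q3) :
    ¬ Summable (fun t3 : ℤ => |r (0, 0, t3)|) := by
  obtain ⟨M, hM⟩ := hg
  have ha' : ∀ s, a s = g s * anisoKernel q1 q2 q3 c1 c2 c3 ν s := fun s => by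
    rw [ha, div_eq_mul_inv]; rfl
  have hfin := eventually_cofinite.mp (hg1.eventually (lt_mem_nhds one_half_lt_one))
  have hF : ∀ s ∉ hfin.toFinset, 1 / 2 < g s := fun s hs => by simpa using hs
  intro hr_sum
  refine not_summable_of_rpow_sub_isLittleO_le (C := ((c1 + c2 + c3) ^ ν * 2 ^ q3)⁻¹ ^ 2 / 4)
    (by positivity) (neg_one_lt_corrExponent hq1 hq2 hq3 hRegion).le
    ((sum_anisoKernel_mul_shift_isLittleO (q₁ := q1) (q₂ := q2) hc1 hc2 hc3 hν hq3 hfin.toFinset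
      (neg_lt_corrExponent hq1 hq2 hq3 hQlow)).const_mul_left (M ^ 2 + 1 / 4)) ?_
    (hr_sum.comp_injective Nat.cast_injective)
  filter_upwards [eventually_ge_atTop 1] with t ht
  have hlow := sum_sub_sum_le_tsum_mul_shift (0, 0, (t : ℤ)) (anisoBox q1 q2 q3 t) _
    (fun s => (anisoKernel_pos hc1 hc2 hc3 s).le) hM hF
    (summable_mul_anisoKernel_mul_shift hq1 hq2 hq3 hc1 hc2 hc3 hν hQup hM _)
  simp_rw [← ha', ← hr] at hlow
  show _ ≤ |r (0, 0, t)|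
  linarith [le_sum_anisoKernel_mul_shift hq1 hq2 hq3 hc1 hc2 hc3 hν ht, le_abs_self (r (0, 0, t))]
end
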